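/- arXiv:1603.00731 — 3 statements merged into one kernel-verified Lean document; each statement's English description precedes it below -/
import Mathlib

section
/- ∫ x dP(x) = 4/7 and ∫ x² dP(x) − (4/7)² = 288/3577; that is, a random variable X with distribution P has expectation E(X) = 4/7 and variance V(X) = 288/3577. -/
/-
Integrating `x` and `x²` against the invariance relation turns the moments `m = E X` and
`M = E X²` into fixed points of affine equations: since `S_{j+1} x = u x / 4 + 1 - u` with
`u = 2^{-j}`, both coefficient series are combinations of `∑ p_{j+1} 2^{-kj}`, `k = 0, 1, 2`,
which are geometric up to the exceptional weight `p_1`. They give `m = m/8 + 1/2` and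
`M = 5M/224 + 39/98`, whence `m = 4/7` and `M = 208/511`.
-/

open MeasureTheory

noncomputable section

/-- The contractive similarity `S j x = x / 2^(j+1) + 1 - 1/2^(j-1)` (used for `j ≥ 1`). -/
def S (j : ℕ) (x : ℝ) : ℝ := x / 2 ^ (j + 1) + 1 - 1 / 2 ^ (j - 1)

/-- The similarity ratio `s j = 1/2^(j+1)`. -/
def s (j : ℕ) : ℝ := 1 / 2 ^ (j + 1)

/-- The probability vector: `p 1 = 1/4`, `p j = 3/2^(j+1)` for `j ≥ 2`. -/
def p (j : ℕ) : ℝ := if j = 1 then 1 / 4 else 3 / 2 ^ (j + 1)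

/-- `Sw ω = S_{ω_1} ∘ ⋯ ∘ S_{ω_k}`. -/
def Sw (ω : List ℕ) : ℝ → ℝ := ω.foldr (fun j f => S j ∘ f) id

/-- `pw ω = p_{ω_1} ⋯ p_{ω_k}`. -/
def pw (ω : List ℕ) : ℝ := (ω.map p).prod

/-- `sw ω = s_{ω_1} ⋯ s_{ω_k}`. -/
def sw (ω : List ℕ) : ℝ := (ω.map s).prod

/-- The basic interval `J_ω = S_ω([0,1])`. -/
def Jw (ω : List ℕ) : Set ℝ := Sw ω '' Set.Icc 0 1

/-- The last letter of a word (junk value `0` for the empty word). -/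
def wlast (ω : List ℕ) : ℕ := ω.getLastD 0

/-- `wext ω j = ω^-(ω_k + j)`: the word `ω` with its last letter increased by `j`. -/
def wext (ω : List ℕ) (j : ℕ) : List ℕ := ω.dropLast ++ [wlast ω + j]

/-- `J_{(ω,∞)} = ⋃_{j=1}^∞ J_{ω^-(ω_k+j)}`. -/
def Jinf (ω : List ℕ) : Set ℝ := ⋃ j : ℕ, Jw (wext ω (j + 1))

/-- `a(ω) = S_ω(4/7)`. -/
def aw (ω : List ℕ) : ℝ := Sw ω (4 / 7)

/-- `a(ω,∞) = S_{ω^-(ω_k+1)}(4/7) + (8/7) s_{ω^-(ω_k+1)}`. -/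
def ainf (ω : List ℕ) : ℝ := Sw (wext ω 1) (4 / 7) + (8 / 7) * sw (wext ω 1)

/-- A (nonempty) word over the alphabet `{1, 2, 3, …}`. -/
def IsWord (ω : List ℕ) : Prop := ω ≠ [] ∧ ∀ i ∈ ω, 1 ≤ i

/-- The invariance relation `P(A) = ∑_{j=1}^∞ p_j P(S_j⁻¹ A)`. -/
def Invariant (P : Measure ℝ) : Prop :=
  ∀ A : Set ℝ, MeasurableSet A →
    P A = ∑' j : ℕ, ENNReal.ofReal (p (j + 1)) * P (S (j + 1) ⁻¹' A)

/-- The distortion error `∫ min_{a ∈ α} (x-a)² dP` of a set `α ⊆ ℝ`. -/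
def distortion (P : Measure ℝ) (α : Set ℝ) : ℝ :=
  ∫ x, (⨅ a : α, (x - (a : ℝ)) ^ 2) ∂P

/-- The `n`-th quantization error for `P`. -/
def quantErr (P : Measure ℝ) (n : ℕ) : ℝ :=
  sInf {r : ℝ | ∃ α : Set ℝ, 1 ≤ α.ncard ∧ α.ncard ≤ n ∧ r = distortion P α}

/-- `α` is an optimal set of `n`-means for `P`. -/
def IsOptimal (P : Measure ℝ) (n : ℕ) (α : Set ℝ) : Prop :=
  1 ≤ α.ncard ∧ α.ncard ≤ n ∧ distortion P α = quantErr P n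

/-- `E(a(ω)) = ∫_{J_ω} (x - a(ω))² dP`. -/
def Ea (P : Measure ℝ) (ω : List ℕ) : ℝ := ∫ x in Jw ω, (x - aw ω) ^ 2 ∂P

/-- `E(a(ω,∞)) = ∫_{J_{(ω,∞)}} (x - a(ω,∞))² dP`. -/
def Eainf (P : Measure ℝ) (ω : List ℕ) : ℝ := ∫ x in Jinf ω, (x - ainf ω) ^ 2 ∂P

/-- The Voronoi region `M(a|α)`. -/
def voronoi (α : Set ℝ) (a : ℝ) : Set ℝ := {x : ℝ | ∀ b ∈ α, |x - a| ≤ |x - b|}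

theorem integral_eq_tsum_of_eq_sum_map {α E : Type*} [MeasurableSpace α] [NormedAddCommGroup E]
    [NormedSpace ℝ E] {μ : Measure α} {w : ℕ → ENNReal} {g : ℕ → α → α}
    (hμ : μ = Measure.sum fun j => w j • μ.map (g j)) (hg : ∀ j, Measurable (g j)) {f : α → E}
    (hfm : StronglyMeasurable f) (hf : Integrable f μ) :
    ∫ x, f x ∂μ = ∑' j, (w j).toReal • ∫ x, f (g j x) ∂μ := by
  rw [hμ] at hf
  conv_lhs => rw [hμ]
  rw [integral_sum_measure hf]
  refine tsum_congr fun j => ?_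
  rw [integral_smul_measure, integral_map (hg j).aemeasurable hfm.aestronglyMeasurable]

theorem integrable_of_continuous_of_ae_mem_compact {α E : Type*} [TopologicalSpace α]
    [MeasurableSpace α] [OpensMeasurableSpace α] [T2Space α] [NormedAddCommGroup E]
    {μ : Measure α} [IsFiniteMeasure μ] {K : Set α} (hK : IsCompact K) (hμ : ∀ᵐ x ∂μ, x ∈ K)
    {f : α → E} (hf : Continuous f) : Integrable f μ := by
  have hK' : IntegrableOn f K μ := hf.continuousOn.integrableOn_compact hK
  rwa [IntegrableOn, Measure.restrict_eq_self_of_ae_mem hμ] at hK'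

theorem integral_affine {μ : Measure ℝ} [IsProbabilityMeasure μ]
    (h1 : Integrable (fun x => x) μ) (a b : ℝ) :
    ∫ x, a * x + b ∂μ = a * ∫ x, x ∂μ + b := by
  rw [integral_add (h1.const_mul a) (integrable_const b), integral_const_mul, integral_const,
    probReal_univ, one_smul]

theorem integral_affine_sq {μ : Measure ℝ} [IsProbabilityMeasure μ]
    (h1 : Integrable (fun x => x) μ) (h2 : Integrable (fun x => x ^ 2) μ) (a b : ℝ) :
    ∫ x, (a * x + b) ^ 2 ∂μ = a ^ 2 * ∫ x, x ^ 2 ∂μ + 2 * a * b * ∫ x, x ∂μ + b ^ 2 := by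
  have hexp : (fun x => (a * x + b) ^ 2) = fun x => a ^ 2 * x ^ 2 + (2 * a * b * x + b ^ 2) := by
    funext x; ring
  have haff : Integrable (fun x => 2 * a * b * x + b ^ 2) μ :=
    (h1.const_mul _).add (integrable_const _)
  rw [hexp, integral_add (h2.const_mul _) haff, integral_const_mul, integral_affine h1, add_assoc]

theorem p_nonneg (j : ℕ) : 0 ≤ p j := by
  unfold p; split_ifs <;> positivity

theorem measurable_S (j : ℕ) : Measurable (S j) := by
  unfold S; fun_prop

theorem S_succ_eq (j : ℕ) (x : ℝ) :
    S (j + 1) x = (1 / 2) ^ j / 4 * x + (1 - (1 / 2) ^ j) := by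
  simp only [S, Nat.add_sub_cancel, one_div, inv_pow, pow_succ]
  ring

theorem p_succ_eq (j : ℕ) : p (j + 1) = 3 / 4 * (1 / 2) ^ j - if j = 0 then 1 / 2 else 0 := by
  rcases j with _ | j
  · norm_num [p]
  · simp only [p, one_div, inv_pow, pow_succ]
    rw [if_neg (by omega), if_neg (by omega)]
    ring

theorem hasSum_p_succ_mul_pow {x : ℝ} (hx : |x| < 2) :
    HasSum (fun j => p (j + 1) * x ^ j) (3 / 4 * (1 - x / 2)⁻¹ - 1 / 2) := by
  have hgeom : HasSum (fun j => (x / 2) ^ j) (1 - x / 2)⁻¹ :=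
    hasSum_geometric_of_abs_lt_one (by rw [abs_div, abs_two]; linarith)
  refine ((hgeom.mul_left (3 / 4)).sub (hasSum_ite_eq 0 (1 / 2 : ℝ))).congr_fun fun j => ?_
  rw [p_succ_eq, sub_mul, mul_assoc, ← mul_pow, one_div_mul_eq_div]
  split_ifs with hj <;> simp [hj]

theorem hasSum_p_succ_mul_quadratic (a b c : ℝ) :
    HasSum (fun j => p (j + 1) * (a + b * (1 / 2) ^ j + c * ((1 / 2) ^ j) ^ 2))
      (a + b / 2 + 5 / 14 * c) := by
  have h1 : HasSum (fun j => p (j + 1) * 1 ^ j) 1 := by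
    convert hasSum_p_succ_mul_pow (x := 1) (by norm_num) using 1; norm_num
  have h2 : HasSum (fun j => p (j + 1) * (1 / 2) ^ j) (1 / 2) := by
    convert hasSum_p_succ_mul_pow (x := 1 / 2) (by norm_num [abs_of_pos]) using 1; norm_num
  have h4 : HasSum (fun j => p (j + 1) * (1 / 4) ^ j) (5 / 14) := by
    convert hasSum_p_succ_mul_pow (x := 1 / 4) (by norm_num [abs_of_pos]) using 1; norm_num
  rw [show a + b / 2 + 5 / 14 * c = a * 1 + b * (1 / 2) + c * (5 / 14) by ring]
  refine (((h1.mul_left a).add (h2.mul_left b)).add (h4.mul_left c)).congr_fun fun j => ?_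
  rw [← pow_mul, mul_comm j, pow_mul]
  norm_num
  ring

namespace Invariant

variable {P : Measure ℝ}

theorem eq_sum_map (hinv : Invariant P) :
    P = Measure.sum fun j => ENNReal.ofReal (p (j + 1)) • P.map (S (j + 1)) := by
  ext A hA
  rw [Measure.sum_apply _ hA, hinv A hA]
  refine tsum_congr fun j => ?_
  rw [Measure.smul_apply, Measure.map_apply (measurable_S _) hA, smul_eq_mul]

theorem integral_eq_tsum (hinv : Invariant P) {f : ℝ → ℝ} (hfm : StronglyMeasurable f)
    (hf : Integrable f P) : ∫ x, f x ∂P = ∑' j, p (j + 1) * ∫ x, f (S (j + 1) x) ∂P := by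
  rw [integral_eq_tsum_of_eq_sum_map hinv.eq_sum_map (fun _ => measurable_S _) hfm hf]
  refine tsum_congr fun j => ?_
  rw [ENNReal.toReal_ofReal (p_nonneg _), smul_eq_mul]

variable [IsProbabilityMeasure P]

theorem integral_id_eq (hinv : Invariant P) (h1 : Integrable (fun x => x) P) :
    ∫ x, x ∂P = (∫ x, x ∂P) / 8 + 1 / 2 := by
  set m := ∫ x, x ∂P
  calc m = ∑' j, p (j + 1) * ∫ x, S (j + 1) x ∂P :=
        hinv.integral_eq_tsum stronglyMeasurable_id h1
    _ = ∑' j, p (j + 1) * (1 + (m / 4 - 1) * (1 / 2) ^ j + 0 * ((1 / 2) ^ j) ^ 2) := by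
        refine tsum_congr fun j => ?_
        simp_rw [S_succ_eq, integral_affine h1]
        ring
    _ = m / 8 + 1 / 2 := by
        rw [(hasSum_p_succ_mul_quadratic _ _ _).tsum_eq]
        ring

theorem integral_sq_eq (hinv : Invariant P) (h1 : Integrable (fun x => x) P)
    (h2 : Integrable (fun x => x ^ 2) P) :
    ∫ x, x ^ 2 ∂P = 5 / 224 * ∫ x, x ^ 2 ∂P + 1 / 14 * ∫ x, x ∂P + 5 / 14 := by
  set m := ∫ x, x ∂P
  set M := ∫ x, x ^ 2 ∂P
  calc M = ∑' j, p (j + 1) * ∫ x, S (j + 1) x ^ 2 ∂P :=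
        hinv.integral_eq_tsum (by fun_prop) h2
    _ = ∑' j, p (j + 1) *
          (1 + (m / 2 - 2) * (1 / 2) ^ j + (M / 16 - m / 2 + 1) * ((1 / 2) ^ j) ^ 2) := by
        refine tsum_congr fun j => ?_
        simp_rw [S_succ_eq, integral_affine_sq h1 h2]
        ring
    _ = 5 / 224 * M + 1 / 14 * m + 5 / 14 := by
        rw [(hasSum_p_succ_mul_quadratic _ _ _).tsum_eq]
        ring

end Invariant

/-- `E(X) = 4/7` and `V(X) = E(X²) - E(X)² = 288/3577` for `X ~ P`. -/
theorem stmt_1 (P : Measure ℝ) [IsProbabilityMeasure P]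
    (hsupp : P (Set.Icc 0 1) = 1) (hinv : Invariant P) :
    (∫ x, x ∂P = 4 / 7) ∧ (∫ x, x ^ 2 ∂P - (4 / 7) ^ 2 = 288 / 3577) := by
  have hae : ∀ᵐ x ∂P, x ∈ Set.Icc (0 : ℝ) 1 := by
    rw [ae_mem_iff_measure_eq measurableSet_Icc.nullMeasurableSet, hsupp, measure_univ]
  have h1 : Integrable (fun x => x) P :=
    integrable_of_continuous_of_ae_mem_compact isCompact_Icc hae continuous_id
  have h2 : Integrable (fun x => x ^ 2) P :=
    integrable_of_continuous_of_ae_mem_compact isCompact_Icc hae (continuous_pow 2)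
  have hm : ∫ x, x ∂P = 4 / 7 := by linarith [hinv.integral_id_eq h1]
  have hM := hinv.integral_sq_eq h1 h2
  rw [hm] at hM
  exact ⟨hm, by linarith⟩
end
end

section
/- For every nonempty word ω over ℕ with last letter ω_k: ∫_{J_ω}(x − a(ω))² dP = p_ω · s_ω² · V; moreover ∫_{J_{(ω,∞)}}(x − a(ω,∞))² dP = (43/9)·p_ω·s_ω²·V if ω_k ≥ 2, and ∫_{J_{(ω,∞)}}(x − a(ω,∞))² dP = (43/3)·p_ω·s_ω²·V if ω_k = 1. -/
open MeasureTheory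

noncomputable section

/-!
Invariance gives `∫ f dP = ∑ⱼ pⱼ ∫ f ∘ Sⱼ dP`, and since the cells `Sⱼ[0,1]` are disjoint this
localises to `∫_{S_ω A} g dP = p_ω ∫_A g ∘ S_ω dP` for `A ⊆ [0,1]`. Hence
`∫_{J_ω} (x - S_ω a)² dP = p_ω s_ω² (V + (a - 4/7)²)`, where the mean `4/7` and the second moment
of `P` are the fixed points of the same relation. The set `J_{(ω,∞)}` is the image under `S_{ω⁻}`
of the disjoint cells `J_{ω_k+j}`, `j ≥ 1`; on the `j`-th of them `a(ω,∞) = S_{ω⁻}(S_{ω_k+1}(12/7))`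
pulls back to `4 - (16/7)·2^{j-1}`, and the resulting series is geometric.
-/

open Set

lemma s_pos (j : ℕ) : 0 < s j := by unfold s; positivity

lemma s_add (i j : ℕ) : s (i + j) = s i * (1 / 2) ^ j := by
  simp only [s, show i + j + 1 = i + 1 + j by omega, pow_add, div_pow, one_pow]
  field_simp

lemma s_le_quarter {j : ℕ} (hj : 1 ≤ j) : s j ≤ 1 / 4 := by
  obtain ⟨k, rfl⟩ := Nat.exists_eq_add_of_le' hj
  calc s (k + 1) = s 1 * (1 / 2) ^ k := by rw [add_comm, s_add]
    _ ≤ s 1 := mul_le_of_le_one_right (s_pos 1).le (pow_le_one₀ (by norm_num) (by norm_num))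
    _ = 1 / 4 := by norm_num [s]

lemma p_eq_three_mul_s {j : ℕ} (hj : 2 ≤ j) : p j = 3 * s j := by
  rw [p, if_neg (by omega), s]; ring

lemma S_eq {j : ℕ} (hj : 1 ≤ j) (x : ℝ) : S j x = s j * x + (1 - 4 * s j) := by
  obtain ⟨n, rfl⟩ := Nat.exists_eq_add_of_le' hj
  simp only [S, s, Nat.add_sub_cancel, pow_succ]
  field_simp
  ring

lemma S_sub_S (j : ℕ) (x y : ℝ) : S j x - S j y = s j * (x - y) := by
  simp only [S, s]; ring

lemma S_injective (j : ℕ) : Function.Injective (S j) := fun x y h => by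
  have := S_sub_S j x y
  rw [h, sub_self, zero_eq_mul] at this
  linarith [this.resolve_left (s_pos j).ne']

lemma continuous_S (j : ℕ) : Continuous (S j) := by unfold S; fun_prop

lemma S_image_Icc_subset {j : ℕ} (hj : 1 ≤ j) :
    S j '' Icc 0 1 ⊆ Icc (1 - 4 * s j) (1 - 3 * s j) := by
  rintro _ ⟨x, ⟨hx0, hx1⟩, rfl⟩
  have := s_pos j
  rw [S_eq hj]
  constructor <;> nlinarith

lemma S_mapsTo_Icc {j : ℕ} (hj : 1 ≤ j) : MapsTo (S j) (Icc 0 1) (Icc 0 1) := fun x hx => by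
  have hJ := S_image_Icc_subset hj (mem_image_of_mem _ hx)
  have := s_pos j
  have := s_le_quarter hj
  exact ⟨by linarith [hJ.1], by linarith [hJ.2]⟩

lemma disjoint_S_image_Icc {i j : ℕ} (hi : 1 ≤ i) (hj : 1 ≤ j) (hij : i ≠ j) :
    Disjoint (S i '' Icc 0 1) (S j '' Icc 0 1) := by
  wlog h : i < j generalizing i j
  · exact (this hj hi hij.symm (by omega)).symm
  have hs : 2 * s j ≤ s i := by
    obtain ⟨k, rfl⟩ := Nat.exists_eq_add_of_le h
    rw [Nat.succ_eq_add_one, s_add, s_add]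
    have : ((1 : ℝ) / 2) ^ k ≤ 1 := pow_le_one₀ (by norm_num) (by norm_num)
    nlinarith [s_pos i]
  refine Set.disjoint_left.2 fun x hxi hxj => ?_
  have := s_pos j
  linarith [(S_image_Icc_subset hi hxi).2, (S_image_Icc_subset hj hxj).1]

lemma Sw_cons (j : ℕ) (ω : List ℕ) (x : ℝ) : Sw (j :: ω) x = S j (Sw ω x) := rfl

lemma Sw_singleton (j : ℕ) (x : ℝ) : Sw [j] x = S j x := rfl

lemma Sw_append (u v : List ℕ) : Sw (u ++ v) = Sw u ∘ Sw v := by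
  induction u with
  | nil => rfl
  | cons j u ih => funext x; rw [List.cons_append, Function.comp_apply, Sw_cons, Sw_cons, ih]; rfl

lemma pw_cons (j : ℕ) (ω : List ℕ) : pw (j :: ω) = p j * pw ω := by simp [pw]

lemma sw_cons (j : ℕ) (ω : List ℕ) : sw (j :: ω) = s j * sw ω := by simp [sw]

lemma pw_singleton (j : ℕ) : pw [j] = p j := by simp [pw]

lemma sw_singleton (j : ℕ) : sw [j] = s j := by simp [sw]

lemma pw_append (u v : List ℕ) : pw (u ++ v) = pw u * pw v := by simp [pw]

lemma sw_append (u v : List ℕ) : sw (u ++ v) = sw u * sw v := by simp [sw]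

lemma Sw_sub_Sw (ω : List ℕ) (x y : ℝ) : Sw ω x - Sw ω y = sw ω * (x - y) := by
  induction ω with
  | nil => simp [Sw, sw]
  | cons j ω ih => rw [Sw_cons, Sw_cons, S_sub_S, ih, sw_cons]; ring

lemma sw_pos (ω : List ℕ) : 0 < sw ω :=
  List.prod_pos fun _ h => by obtain ⟨j, -, rfl⟩ := List.mem_map.1 h; exact s_pos j

lemma Sw_injective (ω : List ℕ) : Function.Injective (Sw ω) := fun x y h => by
  have := Sw_sub_Sw ω x y
  rw [h, sub_self, zero_eq_mul] at this
  linarith [this.resolve_left (sw_pos ω).ne']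

lemma continuous_Sw (ω : List ℕ) : Continuous (Sw ω) := by
  induction ω with
  | nil => exact continuous_id
  | cons j ω ih => exact (continuous_S j).comp ih

lemma image_Sw_cons (j : ℕ) (ω : List ℕ) (A : Set ℝ) : Sw (j :: ω) '' A = S j '' (Sw ω '' A) :=
  image_comp (S j) (Sw ω) A

lemma MeasurableSet.image_Sw {A : Set ℝ} (hA : MeasurableSet A) (ω : List ℕ) :
    MeasurableSet (Sw ω '' A) :=
  hA.image_of_continuousOn_injOn (continuous_Sw ω).continuousOn (Sw_injective ω).injOn

lemma measurableSet_Jw (ω : List ℕ) : MeasurableSet (Jw ω) := measurableSet_Icc.image_Sw ω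

lemma Jw_append (u v : List ℕ) : Jw (u ++ v) = Sw u '' Jw v := by
  rw [Jw, Jw, Sw_append, image_comp]

lemma Sw_image_subset_Icc {ω : List ℕ} (hω : ∀ i ∈ ω, 1 ≤ i) {A : Set ℝ} (hA : A ⊆ Icc 0 1) :
    Sw ω '' A ⊆ Icc 0 1 := by
  induction ω with
  | nil => simpa [Sw] using hA
  | cons j ω ih =>
    rw [image_Sw_cons]
    exact (S_mapsTo_Icc (hω j List.mem_cons_self)).image_subset.trans' <|
      image_mono (ih fun i hi => hω i (List.mem_cons_of_mem j hi))

section SelfSimilar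

variable {P : Measure ℝ} [IsProbabilityMeasure P]

lemma ae_mem_Icc (hsupp : P (Icc 0 1) = 1) : ∀ᵐ x ∂P, x ∈ Icc (0 : ℝ) 1 :=
  (ae_mem_iff_measure_eq measurableSet_Icc.nullMeasurableSet).2 (by rw [hsupp, measure_univ])

lemma setIntegral_Icc_eq_integral (hsupp : P (Icc 0 1) = 1) (f : ℝ → ℝ) :
    ∫ x in Icc 0 1, f x ∂P = ∫ x, f x ∂P := by
  rw [Measure.restrict_eq_self_of_ae_mem (ae_mem_Icc hsupp)]

lemma Continuous.integrable_of_measure_Icc (hsupp : P (Icc 0 1) = 1) {g : ℝ → ℝ}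
    (hg : Continuous g) : Integrable g P := by
  rw [← Measure.restrict_eq_self_of_ae_mem (ae_mem_Icc hsupp)]
  exact hg.continuousOn.integrableOn_compact isCompact_Icc

omit [IsProbabilityMeasure P] in
lemma Invariant.eq_sum_map_s3 (hinv : Invariant P) :
    P = Measure.sum fun j : ℕ => ENNReal.ofReal (p (j + 1)) • P.map (S (j + 1)) := by
  ext A hA
  rw [Measure.sum_apply _ hA, hinv A hA]
  congr 1 with j
  rw [Measure.smul_apply, Measure.map_apply (continuous_S _).measurable hA, smul_eq_mul]

omit [IsProbabilityMeasure P] in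
lemma Invariant.integral_eq_tsum_s3 (hinv : Invariant P) {f : ℝ → ℝ} (hmf : Measurable f)
    (hf : Integrable f P) : ∫ x, f x ∂P = ∑' j : ℕ, p (j + 1) * ∫ x, f (S (j + 1) x) ∂P := by
  rw [hinv.eq_sum_map_s3] at hf
  conv_lhs => rw [hinv.eq_sum_map_s3]
  rw [integral_sum_measure hf]
  congr 1 with j
  rw [integral_smul_measure, integral_map (continuous_S _).aemeasurable hmf.aestronglyMeasurable,
    ENNReal.toReal_ofReal (by unfold p; split <;> positivity), smul_eq_mul]

/-- Only the `j`-th term of the invariance relation sees `S j '' A`: the cells `S i '' [0, 1]` are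
pairwise disjoint. -/
lemma setIntegral_S_image (hsupp : P (Icc 0 1) = 1) (hinv : Invariant P) {j : ℕ} (hj : 1 ≤ j)
    {A : Set ℝ} (hA : MeasurableSet A) (hA1 : A ⊆ Icc 0 1) {g : ℝ → ℝ} (hg : Continuous g) :
    ∫ x in S j '' A, g x ∂P = p j * ∫ x in A, g (S j x) ∂P := by
  have hSA : MeasurableSet (S j '' A) :=
    hA.image_of_continuousOn_injOn (continuous_S j).continuousOn (S_injective j).injOn
  rw [← integral_indicator hSA, hinv.integral_eq_tsum_s3 (hg.measurable.indicator hSA)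
    ((hg.integrable_of_measure_Icc hsupp).indicator hSA), tsum_eq_single (j - 1)]
  · simp only [Nat.sub_add_cancel hj, indicator_image (S_injective j)]
    rw [integral_indicator hA]
    rfl
  · intro i hi
    suffices ∫ x, (S j '' A).indicator g (S (i + 1) x) ∂P = 0 by rw [this, mul_zero]
    refine integral_eq_zero_of_ae ?_
    filter_upwards [ae_mem_Icc hsupp] with x hx
    refine indicator_of_notMem (fun hxA => ?_) g
    exact Set.disjoint_left.1 (disjoint_S_image_Icc (by omega) hj (by omega))
      (mem_image_of_mem _ hx) (image_mono hA1 hxA)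

lemma setIntegral_Sw_image (hsupp : P (Icc 0 1) = 1) (hinv : Invariant P) {ω : List ℕ}
    (hω : ∀ i ∈ ω, 1 ≤ i) {A : Set ℝ} (hA : MeasurableSet A) (hA1 : A ⊆ Icc 0 1) {g : ℝ → ℝ}
    (hg : Continuous g) : ∫ x in Sw ω '' A, g x ∂P = pw ω * ∫ x in A, g (Sw ω x) ∂P := by
  induction ω generalizing g with
  | nil => simp [Sw, pw]
  | cons j ω ih =>
    have hω' : ∀ i ∈ ω, 1 ≤ i := fun i hi => hω i (List.mem_cons_of_mem j hi)
    rw [image_Sw_cons, setIntegral_S_image hsupp hinv (hω j List.mem_cons_self) (hA.image_Sw ω)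
      (Sw_image_subset_Icc hω' hA1) hg, ih hω' (g := fun x => g (S j x)) (hg.comp (continuous_S j)),
      pw_cons, mul_assoc]
    rfl

lemma setIntegral_Sw_image_sub_sq (hsupp : P (Icc 0 1) = 1) (hinv : Invariant P) {ω : List ℕ}
    (hω : ∀ i ∈ ω, 1 ≤ i) {A : Set ℝ} (hA : MeasurableSet A) (hA1 : A ⊆ Icc 0 1) (a : ℝ) :
    ∫ x in Sw ω '' A, (x - Sw ω a) ^ 2 ∂P = pw ω * sw ω ^ 2 * ∫ x in A, (x - a) ^ 2 ∂P := by
  rw [setIntegral_Sw_image hsupp hinv hω hA hA1 (by fun_prop), mul_assoc]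
  congr 1
  rw [← integral_const_mul]
  simp only [Sw_sub_Sw, mul_pow]

end SelfSimilar

lemma hasSum_p_mul_s_pow (k : ℕ) :
    HasSum (fun j : ℕ => p (j + 1) * s (j + 1) ^ k)
      (3 * (1 / 8) ^ (k + 1) * (1 - (1 / 2) ^ (k + 1))⁻¹ + 1 / 4 * (1 / 4) ^ k) := by
  have hr : ((1 : ℝ) / 2) ^ (k + 1) < 1 := pow_lt_one₀ (by norm_num) (by norm_num) (by omega)
  have hgeom := (hasSum_geometric_of_lt_one (by positivity) hr).mul_left (3 * (1 / 8) ^ (k + 1))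
  have hterm : ∀ j : ℕ, p (j + 1 + 1) * s (j + 1 + 1) ^ k
      = 3 * (1 / 8) ^ (k + 1) * ((1 / 2) ^ (k + 1)) ^ j := fun j => by
    have hs : s (j + 1 + 1) = 1 / 8 * (1 / 2) ^ j := by
      rw [show j + 1 + 1 = 2 + j by omega, s_add]; norm_num [s]
    rw [p_eq_three_mul_s (by omega), hs, mul_assoc, ← pow_succ', mul_pow, ← pow_mul, ← pow_mul,
      mul_comm j, mul_assoc]
  have hhead : ∑ i ∈ Finset.range 1, p (i + 1) * s (i + 1) ^ k = 1 / 4 * (1 / 4) ^ k := by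
    norm_num [p, s]
    rw [one_div, inv_pow]
  rw [← hhead]
  exact (hasSum_nat_add_iff (f := fun j => p (j + 1) * s (j + 1) ^ k) 1).1
    (by simpa only [hterm] using hgeom)

lemma tsum_p_mul_quadratic (c₀ c₁ c₂ : ℝ) :
    ∑' j : ℕ, p (j + 1) * (c₀ + c₁ * s (j + 1) + c₂ * s (j + 1) ^ 2)
      = c₀ + c₁ / 8 + 5 * c₂ / 224 := by
  have h := (((hasSum_p_mul_s_pow 0).mul_left c₀).add ((hasSum_p_mul_s_pow 1).mul_left c₁)).add
    ((hasSum_p_mul_s_pow 2).mul_left c₂)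
  convert h.tsum_eq using 1
  · congr 1 with j
    ring
  · ring

section Moments

variable {P : Measure ℝ} [IsProbabilityMeasure P]

lemma integral_mul_add (hsupp : P (Icc 0 1) = 1) (c b : ℝ) :
    ∫ x, (c * x + b) ∂P = c * ∫ x, x ∂P + b := by
  have hx : Integrable (fun x : ℝ => x) P := continuous_id.integrable_of_measure_Icc hsupp
  rw [integral_add (hx.const_mul c) (integrable_const b),
    integral_const_mul, integral_const, probReal_univ, one_smul]

lemma integral_mul_add_sq (hsupp : P (Icc 0 1) = 1) (c b : ℝ) :
    ∫ x, (c * x + b) ^ 2 ∂P = c ^ 2 * ∫ x, x ^ 2 ∂P + 2 * c * b * ∫ x, x ∂P + b ^ 2 := by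
  have e : ∀ x : ℝ, (c * x + b) ^ 2 = c ^ 2 * x ^ 2 + (2 * c * b * x + b ^ 2) := fun x => by ring
  have hx : Integrable (fun x : ℝ => x) P := continuous_id.integrable_of_measure_Icc hsupp
  have hx2 : Integrable (fun x : ℝ => x ^ 2) P := (continuous_pow 2).integrable_of_measure_Icc hsupp
  have hlin : Integrable (fun x : ℝ => 2 * c * b * x + b ^ 2) P :=
    (hx.const_mul _).add (integrable_const _)
  simp only [e]
  rw [integral_add (hx2.const_mul _) hlin,
    integral_const_mul, integral_mul_add hsupp]
  ring

lemma integral_id_eq (hsupp : P (Icc 0 1) = 1) (hinv : Invariant P) : ∫ x, x ∂P = 4 / 7 := by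
  set M := ∫ x, x ∂P
  have h := hinv.integral_eq_tsum_s3 measurable_id (continuous_id.integrable_of_measure_Icc hsupp)
  have hterm : ∀ j : ℕ, p (j + 1) * ∫ x, S (j + 1) x ∂P
      = p (j + 1) * (1 + (M - 4) * s (j + 1) + 0 * s (j + 1) ^ 2) := fun j => by
    simp only [S_eq (Nat.le_add_left 1 j), integral_mul_add hsupp]
    ring
  simp only [id] at h
  rw [tsum_congr hterm, tsum_p_mul_quadratic] at h
  linarith

lemma integral_sq_eq (hsupp : P (Icc 0 1) = 1) (hinv : Invariant P) :
    ∫ x, x ^ 2 ∂P = 1456 / 3577 := by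
  set M := ∫ x, x ^ 2 ∂P
  have h := hinv.integral_eq_tsum_s3 (continuous_pow 2).measurable
    ((continuous_pow 2).integrable_of_measure_Icc hsupp)
  have hterm : ∀ j : ℕ, p (j + 1) * ∫ x, S (j + 1) x ^ 2 ∂P
      = p (j + 1) * (1 + (8 / 7 - 8) * s (j + 1) + (16 - 32 / 7 + M) * s (j + 1) ^ 2) :=
    fun j => by
      simp only [S_eq (Nat.le_add_left 1 j), integral_mul_add_sq hsupp, integral_id_eq hsupp hinv]
      ring
  rw [tsum_congr hterm, tsum_p_mul_quadratic] at h
  linarith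

lemma integral_sub_sq (hsupp : P (Icc 0 1) = 1) (hinv : Invariant P) (a : ℝ) :
    ∫ x, (x - a) ^ 2 ∂P = 288 / 3577 + (a - 4 / 7) ^ 2 := by
  have e : ∀ x : ℝ, (x - a) ^ 2 = (1 * x + -a) ^ 2 := fun x => by ring
  rw [integral_congr_ae (.of_forall e), integral_mul_add_sq hsupp, integral_id_eq hsupp hinv,
    integral_sq_eq hsupp hinv]
  ring

end Moments

lemma hasSum_tail_series :
    HasSum (fun j : ℕ => 3 * (1 / 8 : ℝ) ^ (j + 1) * (288 / 3577 + (24 / 7 - 16 / 7 * 2 ^ j) ^ 2))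
      (43 / 3 * (288 / 3577)) := by
  have h8 := hasSum_geometric_of_lt_one (r := (1 / 8 : ℝ)) (by norm_num) (by norm_num)
  have h4 := hasSum_geometric_of_lt_one (r := (1 / 4 : ℝ)) (by norm_num) (by norm_num)
  have h2 := hasSum_geometric_of_lt_one (r := (1 / 2 : ℝ)) (by norm_num) (by norm_num)
  have h := ((h8.mul_left (3 / 8 * (288 / 3577 + 576 / 49))).add
    (h4.mul_left (-(3 / 8 * 768 / 49)))).add (h2.mul_left (3 / 8 * 256 / 49))
  have hfun :
      (fun j : ℕ => 3 * (1 / 8 : ℝ) ^ (j + 1) * (288 / 3577 + (24 / 7 - 16 / 7 * 2 ^ j) ^ 2))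
      = fun j => 3 / 8 * (288 / 3577 + 576 / 49) * (1 / 8) ^ j + -(3 / 8 * 768 / 49) * (1 / 4) ^ j
        + 3 / 8 * 256 / 49 * (1 / 2) ^ j := by
    funext j
    have h4j : (1 / 4 : ℝ) ^ j = (1 / 8) ^ j * 2 ^ j := by
      rw [← mul_pow]; norm_num
    have h2j : (1 / 2 : ℝ) ^ j = (1 / 8) ^ j * (2 ^ j) ^ 2 := by
      rw [sq, ← mul_pow, ← mul_pow]; norm_num
    rw [h4j, h2j]
    ring
  have hval : (43 / 3 * (288 / 3577) : ℝ) = 3 / 8 * (288 / 3577 + 576 / 49) * (1 - 1 / 8)⁻¹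
      + -(3 / 8 * 768 / 49) * (1 - 1 / 4)⁻¹ + 3 / 8 * 256 / 49 * (1 - 1 / 2)⁻¹ := by
    norm_num
  rw [hfun, hval]
  exact h

lemma wext_singleton (l k : ℕ) : wext [l] k = [l + k] := rfl

lemma wext_concat (D : List ℕ) (l k : ℕ) : wext (D ++ [l]) k = D ++ [l + k] := by
  rw [wext, wlast, List.dropLast_concat, List.getLastD_concat]

lemma ainf_singleton (l : ℕ) : ainf [l] = S (l + 1) (12 / 7) := by
  rw [ainf, wext_singleton, Sw_singleton, sw_singleton]
  linarith [S_sub_S (l + 1) (12 / 7) (4 / 7)]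

lemma ainf_concat (D : List ℕ) (l : ℕ) : ainf (D ++ [l]) = Sw D (ainf [l]) := by
  rw [ainf, ainf, wext_concat, wext_singleton, Sw_append, sw_append, Function.comp_apply]
  linarith [Sw_sub_Sw D (Sw [l + 1] (4 / 7) + 8 / 7 * sw [l + 1]) (Sw [l + 1] (4 / 7))]

lemma Jinf_concat (D : List ℕ) (l : ℕ) : Jinf (D ++ [l]) = Sw D '' Jinf [l] := by
  simp only [Jinf, wext_concat, wext_singleton, Jw_append, image_iUnion]

lemma Jinf_singleton_subset_Icc (l : ℕ) : Jinf [l] ⊆ Icc 0 1 :=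
  iUnion_subset fun j => (S_mapsTo_Icc (by omega)).image_subset

lemma measurableSet_Jinf (ω : List ℕ) : MeasurableSet (Jinf ω) :=
  .iUnion fun _ => measurableSet_Jw _

section Quantization

variable {P : Measure ℝ} [IsProbabilityMeasure P]

lemma Ea_eq (hsupp : P (Icc 0 1) = 1) (hinv : Invariant P) {ω : List ℕ} (hω : ∀ i ∈ ω, 1 ≤ i) :
    Ea P ω = pw ω * sw ω ^ 2 * (288 / 3577) := by
  rw [Ea, Jw, aw, setIntegral_Sw_image_sub_sq hsupp hinv hω measurableSet_Icc subset_rfl,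
    setIntegral_Icc_eq_integral hsupp, integral_sub_sq hsupp hinv]
  ring

lemma Eainf_concat (hsupp : P (Icc 0 1) = 1) (hinv : Invariant P) {D : List ℕ}
    (hD : ∀ i ∈ D, 1 ≤ i) (l : ℕ) :
    Eainf P (D ++ [l]) = pw D * sw D ^ 2 * Eainf P [l] := by
  rw [Eainf, Jinf_concat, ainf_concat, setIntegral_Sw_image_sub_sq hsupp hinv hD
    (measurableSet_Jinf _) (Jinf_singleton_subset_Icc l), Eainf]

lemma Eainf_singleton (hsupp : P (Icc 0 1) = 1) (hinv : Invariant P) {l : ℕ} (hl : 1 ≤ l) :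
    Eainf P [l] = s l ^ 3 * (43 / 3 * (288 / 3577)) := by
  have hdisj : Pairwise (Function.onFun Disjoint fun j : ℕ => Jw [l + (j + 1)]) :=
    fun i j hij => disjoint_S_image_Icc (by omega) (by omega) (by omega)
  have hint : Integrable (fun x => (x - ainf [l]) ^ 2) P :=
    Continuous.integrable_of_measure_Icc hsupp (by fun_prop)
  have hpiece : ∀ j : ℕ, ∫ x in Jw [l + (j + 1)], (x - ainf [l]) ^ 2 ∂P
      = s l ^ 3 * (3 * (1 / 8) ^ (j + 1) * (288 / 3577 + (24 / 7 - 16 / 7 * 2 ^ j) ^ 2)) := by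
    intro j
    have hs : s (l + (j + 1)) = s l * (1 / 2) ^ (j + 1) := s_add l (j + 1)
    have hcentre : ainf [l] = Sw [l + (j + 1)] (4 - 16 / 7 * 2 ^ j) := by
      have h2 : (1 / 2 : ℝ) ^ j * 2 ^ j = 1 := by rw [← mul_pow]; norm_num
      rw [ainf_singleton, Sw_singleton, S_eq (by omega), S_eq (by omega), hs, s_add l 1]
      linear_combination (8 / 7 * s l) * h2
    rw [hcentre, Jw, setIntegral_Sw_image_sub_sq hsupp hinv
      (List.forall_mem_singleton.2 (by omega)) measurableSet_Icc subset_rfl,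
      setIntegral_Icc_eq_integral hsupp, integral_sub_sq hsupp hinv, pw_singleton, sw_singleton,
      p_eq_three_mul_s (by omega), hs]
    have h8 : (1 / 8 : ℝ) ^ (j + 1) = ((1 / 2) ^ (j + 1)) ^ 3 := by
      rw [← pow_mul, mul_comm, pow_mul]; norm_num
    rw [h8]
    ring
  rw [Eainf, Jinf]
  simp only [wext_singleton]
  rw [integral_iUnion (fun j => measurableSet_Jw _) hdisj hint.integrableOn, tsum_congr hpiece,
    tsum_mul_left, hasSum_tail_series.tsum_eq]

end Quantization

/-- `∫_{J_ω}(x-a(ω))² dP = p_ω s_ω² V`, and `∫_{J_{(ω,∞)}}(x-a(ω,∞))² dP` equals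
`(43/9) p_ω s_ω² V` if the last letter of `ω` is `≥ 2`, and `(43/3) p_ω s_ω² V` if it is `1`,
where `V = 288/3577`. -/
theorem stmt_3 (P : Measure ℝ) [IsProbabilityMeasure P]
    (hsupp : P (Set.Icc 0 1) = 1) (hinv : Invariant P) (ω : List ℕ) (hω : IsWord ω) :
    Ea P ω = pw ω * sw ω ^ 2 * (288 / 3577) ∧
    (2 ≤ wlast ω → Eainf P ω = (43 / 9) * (pw ω * sw ω ^ 2 * (288 / 3577))) ∧
    (wlast ω = 1 → Eainf P ω = (43 / 3) * (pw ω * sw ω ^ 2 * (288 / 3577))) := by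
  obtain ⟨hne, hletters⟩ := hω
  refine ⟨Ea_eq hsupp hinv hletters, ?_⟩
  obtain ⟨D, l, rfl⟩ := (List.eq_nil_or_concat' ω).resolve_left hne
  have hD : ∀ i ∈ D, 1 ≤ i := fun i hi => hletters i (List.mem_append_left _ hi)
  have hl : 1 ≤ l := hletters l (List.mem_append_right _ (List.mem_singleton_self l))
  rw [wlast, List.getLastD_concat, pw_append, sw_append, pw_singleton, sw_singleton,
    Eainf_concat hsupp hinv hD l, Eainf_singleton hsupp hinv hl]
  refine ⟨fun hl2 => ?_, fun hl1 => ?_⟩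
  · rw [p_eq_three_mul_s hl2]
    ring
  · rw [hl1, show p 1 = s 1 by norm_num [p, s]]
    ring
end
end

section
/- For any two nonempty words ω = ω_1⋯ω_k and τ = τ_1⋯τ_m over the alphabet ℕ = {1,2,3,…}, if p_ω = p_τ then s_ω = s_τ. -/
open MeasureTheory

noncomputable section

lemma pw_sw_form (ω : List ℕ) (hω : ∀ i ∈ ω, 1 ≤ i) :
    ∃ a b : ℕ, pw ω = 3 ^ a / 2 ^ b ∧ sw ω = 1 / 2 ^ b := by
  induction ω with
  | nil => exact ⟨0, 0, by simp [pw, sw]⟩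
  | cons j t ih =>
    obtain ⟨a, b, h1, h2⟩ := ih (fun i hi => hω i (List.mem_cons_of_mem _ hi))
    have hpw : pw (j :: t) = p j * pw t := by simp [pw]
    have hsw : sw (j :: t) = s j * sw t := by simp [sw]
    by_cases hj : j = 1
    · refine ⟨a, b + 2, ?_, ?_⟩
      · rw [hpw, h1, hj]; simp [p]; ring
      · rw [hsw, h2, hj]; simp [s]; ring
    · refine ⟨a + 1, b + (j + 1), ?_, ?_⟩
      · rw [hpw, h1]; simp [p, hj]; rw [pow_add, pow_add]; ring
      · rw [hsw, h2]; simp [s]; rw [pow_add]; ring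

/-- For nonempty words `ω, τ` over `{1,2,…}`, `p_ω = p_τ` implies `s_ω = s_τ`. -/
theorem stmt_4 (ω τ : List ℕ) (hω : IsWord ω) (hτ : IsWord τ) (h : pw ω = pw τ) :
    sw ω = sw τ := by
  obtain ⟨a, b, hp1, hs1⟩ := pw_sw_form ω hω.2
  obtain ⟨c, d, hp2, hs2⟩ := pw_sw_form τ hτ.2
  rw [hp1, hp2] at h
  have h2b : (0:ℝ) < 2 ^ b := by positivity
  have h2d : (0:ℝ) < 2 ^ d := by positivity
  have hre : (3:ℝ) ^ a * 2 ^ d = 3 ^ c * 2 ^ b := by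
    field_simp at h; linarith [h]
  have hnat : (3:ℕ) ^ a * 2 ^ d = 3 ^ c * 2 ^ b := by
    have := hre
    exact_mod_cast this
  have hbd : b = d := by
    have := congrArg (fun n => n.factorization 2) hnat
    simpa [Nat.factorization_mul, Nat.factorization_pow, Nat.Prime.factorization,
      (by norm_num : Nat.Prime 2), (by norm_num : Nat.Prime 3)] using this.symm
  rw [hs1, hs2, hbd]
end
end
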